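/- Let (V, w) be a d-regular weighted graph with d > 0, all vertices colored red; fix an integer s ≥ 2, add a disjoint blue vertex set V_B with |V_B| = |V|, fix B ⊆ V_B with |B| = s, give every pair of distinct vertices of B weight t = 2d/(s−1), keep the weights w inside V, and give all remaining pairs involving V_B weight 0; call the resulting weighted graph G'. Let μ, η > 0, and let F be a fair set of vertices of G' with k := |F ∩ V| satisfying k ≥ 2μs, and suppose W(F ∩ V) ≤ η·d·s. Then the density of F satisfies D_F ≤ d + η·d/(4μ). -/

import Mathlib

/-- `W(X)`: sum over ordered pairs of (distinct, since the diagonal weight is 0)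
vertices of `X` of the weight of the pair. -/
noncomputable def pairWeight {α : Type*} (w : α → α → ℝ) (X : Finset α) : ℝ :=
  ∑ i ∈ X, ∑ j ∈ X, w i j

/-- Density of a vertex set `X` in a weighted graph: `D_X = W(X)/|X|`. -/
noncomputable def wdensity {α : Type*} (w : α → α → ℝ) (X : Finset α) : ℝ :=
  pairWeight w X / X.card

/-- soundness case (2): if `F` is fair with `k = |F ∩ V| ≥ 2μs`
(`μ, η > 0`) and `W(F ∩ V) ≤ η·d·s`, then `D_F ≤ d + η·d/(4μ)`. -/
theorem sse_soundness_case_13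
    {V : Type*} [Fintype V] [DecidableEq V]
    (w : V → V → ℝ) (d : ℝ) (hd : 0 < d)
    (hsymm : ∀ i j, w i j = w j i) (hnonneg : ∀ i j, 0 ≤ w i j)
    (hdiag : ∀ i, w i i = 0)
    (hreg : ∀ i, ∑ j, w i j = d)
    (s : ℕ) (hs2 : 2 ≤ s) (B : Finset V) (hB : B.card = s)
    (t : ℝ) (ht : t = 2 * d / (s - 1))
    -- the weights of G' on V ⊕ V (left = red original copy, right = blue copy):
    (w' : V ⊕ V → V ⊕ V → ℝ)
    (hw' : w' = fun a b =>
      match a, b with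
      | .inl i, .inl j => w i j
      | .inr i, .inr j => if i ∈ B ∧ j ∈ B ∧ i ≠ j then t else 0
      | _, _ => 0)
    -- a fair set F of vertices of G', decomposed into its red and blue parts:
    (Fred Fblue : Finset V) (hfair : Fred.card = Fblue.card)
    (F : Finset (V ⊕ V))
    (hF : F = Fred.map ⟨Sum.inl, Sum.inl_injective⟩ ∪ Fblue.map ⟨Sum.inr, Sum.inr_injective⟩)
    (k : ℕ) (hk : k = Fred.card)
    (μ η : ℝ) (hμ0 : 0 < μ) (hη0 : 0 < η) (hk2 : (k : ℝ) ≥ 2 * μ * s)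
    (hWF : pairWeight w Fred ≤ η * d * s) :
    wdensity w' F ≤ d + η * d / (4 * μ) := by
  have hs1 : (1:ℝ) ≤ (s:ℝ) := by
    have : (2:ℝ) ≤ (s:ℝ) := by exact_mod_cast hs2
    linarith
  have hsm1 : (0:ℝ) < (s:ℝ) - 1 := by
    have : (2:ℝ) ≤ (s:ℝ) := by exact_mod_cast hs2
    linarith
  have ht0 : 0 ≤ t := by
    rw [ht]
    apply div_nonneg <;> linarith
  have htm : t * ((s:ℝ) - 1) = 2 * d := by
    rw [ht]; field_simp
  have hdisj : Disjoint (Fred.map ⟨Sum.inl, Sum.inl_injective⟩)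
      (Fblue.map ⟨Sum.inr, Sum.inr_injective⟩) := by
    simp [Finset.disjoint_left, Finset.mem_map]
  -- compute pairWeight of F
  have hpw : pairWeight w' F = pairWeight w Fred +
      ∑ i ∈ Fblue, ∑ j ∈ Fblue, (if i ∈ B ∧ j ∈ B ∧ i ≠ j then t else 0) := by
    simp [pairWeight, hF, hw', Finset.sum_union hdisj, Finset.sum_map]
  -- bound on blue part
  have hinner : ∀ i ∈ Fblue,
      ∑ j ∈ Fblue, (if i ∈ B ∧ j ∈ B ∧ i ≠ j then t else 0) ≤ 2 * d := by
    intro i _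
    by_cases hi : i ∈ B
    · have h1 : ∑ j ∈ Fblue, (if i ∈ B ∧ j ∈ B ∧ i ≠ j then t else 0)
          ≤ ∑ j ∈ Fblue, (if j ∈ B.erase i then t else 0) := by
        apply Finset.sum_le_sum
        intro j _
        by_cases hj : j ∈ B.erase i
        · rw [if_pos hj]
          split_ifs with h
          · exact le_rfl
          · exact ht0
        · rw [if_neg hj, if_neg]
          rintro ⟨_, hjB, hij⟩
          exact hj (Finset.mem_erase.mpr ⟨Ne.symm hij, hjB⟩)
      have h2 : ∑ j ∈ Fblue, (if j ∈ B.erase i then t else 0)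
          = ((Fblue ∩ B.erase i).card : ℝ) * t := by
        rw [Finset.sum_ite_mem, Finset.sum_const, nsmul_eq_mul]
      have h3 : (Fblue ∩ B.erase i).card ≤ s - 1 := by
        calc (Fblue ∩ B.erase i).card ≤ (B.erase i).card :=
              Finset.card_le_card Finset.inter_subset_right
          _ = s - 1 := by rw [Finset.card_erase_of_mem hi, hB]
      have h4 : ((Fblue ∩ B.erase i).card : ℝ) ≤ (s:ℝ) - 1 := by
        have h3c : ((Fblue ∩ B.erase i).card : ℝ) ≤ ((s - 1 : ℕ) : ℝ) := by
          exact_mod_cast h3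
        have h1s : 1 ≤ s := by omega
        rw [Nat.cast_sub h1s] at h3c
        simpa using h3c
      calc ∑ j ∈ Fblue, (if i ∈ B ∧ j ∈ B ∧ i ≠ j then t else 0)
          ≤ ((Fblue ∩ B.erase i).card : ℝ) * t := by rw [← h2]; exact h1
        _ ≤ ((s:ℝ) - 1) * t := mul_le_mul_of_nonneg_right h4 ht0
        _ = 2 * d := by rw [mul_comm]; exact htm
    · have hz : ∀ j ∈ Fblue, (if i ∈ B ∧ j ∈ B ∧ i ≠ j then t else 0) = 0 := by
        intro j _
        rw [if_neg]
        rintro ⟨hiB, _⟩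
        exact hi hiB
      rw [Finset.sum_congr rfl hz, Finset.sum_const_zero]
      linarith
  have hblue : ∑ i ∈ Fblue, ∑ j ∈ Fblue, (if i ∈ B ∧ j ∈ B ∧ i ≠ j then t else 0)
      ≤ (k : ℝ) * (2 * d) := by
    calc ∑ i ∈ Fblue, ∑ j ∈ Fblue, (if i ∈ B ∧ j ∈ B ∧ i ≠ j then t else 0)
        ≤ ∑ _i ∈ Fblue, (2 * d) := Finset.sum_le_sum hinner
      _ = (Fblue.card : ℝ) * (2 * d) := by rw [Finset.sum_const, nsmul_eq_mul]
      _ = (k : ℝ) * (2 * d) := by rw [hk, hfair]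
  have hcard : (F.card : ℝ) = 2 * k := by
    rw [hF, Finset.card_union_of_disjoint hdisj, Finset.card_map, Finset.card_map,
      hk, ← hfair]
    push_cast; ring
  have hkpos : (0:ℝ) < (k:ℝ) := by
    have : (2:ℝ) ≤ (s:ℝ) := by exact_mod_cast hs2
    nlinarith
  rw [wdensity, hcard, hpw]
  rw [div_le_iff₀ (by linarith : (0:ℝ) < 2 * (k:ℝ))]
  have key : η * d * s ≤ η * d / (4 * μ) * (2 * k) := by
    have h1 : η * d / (4 * μ) * (4 * μ * s) = η * d * s := by
      field_simp
    have h2 : η * d / (4 * μ) * (4 * μ * s) ≤ η * d / (4 * μ) * (2 * k) := by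
      apply mul_le_mul_of_nonneg_left _ (by positivity)
      linarith
    linarith
  nlinarith [hWF, hblue, key]
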